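/- Let μ be a locally finite Borel measure on ℝⁿ and 0 ≤ α < n. Then for every x ∈ ℝⁿ, the fractional maximal function satisfies M_α μ(x) ≤ c_{n,α} · Σ_{t ∈ {0,1/3}ⁿ} M_α^{𝒟_t} μ(x), where the sum ranges over the 2ⁿ shifted dyadic grids and c_{n,α} is a constant depending only on n and α. -/

import Mathlib

open MeasureTheory
open scoped ENNReal

/-- The fractional maximal function `M_α μ(x) = sup_{r>0} r^α μ(B_r(x))/|B_r(x)|`. -/
noncomputable def fracMax (n : ℕ) (α : ℝ) (μ : Measure (EuclideanSpace ℝ (Fin n)))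
    (x : EuclideanSpace ℝ (Fin n)) : ℝ≥0∞ :=
  ⨆ (r : ℝ) (_ : 0 < r),
    ENNReal.ofReal (r ^ α) * μ (Metric.ball x r) / volume (Metric.ball x r)

/-- The shifted dyadic cube `2^k([0,1)ⁿ + m + (-1)^k t)` in ℝⁿ. -/
def shiftedDyadicCube (n : ℕ) (k : ℤ) (m : Fin n → ℤ) (t : Fin n → ℝ) :
    Set (EuclideanSpace ℝ (Fin n)) :=
  {y | ∀ i, (2 : ℝ) ^ k * ((m i : ℝ) + (-1 : ℝ) ^ k * t i) ≤ y i ∧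
        y i < (2 : ℝ) ^ k * ((m i : ℝ) + (-1 : ℝ) ^ k * t i + 1)}

/-- The dyadic fractional maximal operator associated with the shifted grid `𝒟_t`. -/
noncomputable def dyadicFracMax (n : ℕ) (α : ℝ) (t : Fin n → ℝ)
    (μ : Measure (EuclideanSpace ℝ (Fin n))) (x : EuclideanSpace ℝ (Fin n)) : ℝ≥0∞ :=
  ⨆ (k : ℤ) (m : Fin n → ℤ) (_ : x ∈ shiftedDyadicCube n k m t),
    ENNReal.ofReal (((2 : ℝ) ^ k) ^ α) * μ (shiftedDyadicCube n k m t)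
      / volume (shiftedDyadicCube n k m t)


/-!
Given a ball `B(x, r)`, pick the dyadic scale `2^k ∈ (6r, 12r]`, so that `2r < 2^k/3`. The
endpoints of the two one-dimensional grids `2^k ℤ` and `2^k (ℤ + (-1)^k/3)` together leave no gap
longer than `2^k · 2/3`, so in each coordinate some interval of one of them starts at most that far
below `xᵢ - r` and therefore contains `(xᵢ - r, xᵢ + r)`. Choosing the grid coordinatewise gives a
cube `Q ∈ 𝒟_t` with `B ⊆ Q`, `ℓ(Q) ≥ r` and `|Q| ≤ 12ⁿ |B| / |B(0,1)|`, which bounds the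
normalized average over `B` by that over `Q`.
-/

lemma abs_apply_sub_apply_le_dist {n : ℕ} (x y : EuclideanSpace ℝ (Fin n)) (i : Fin n) :
    |y i - x i| ≤ dist y x := by
  simpa only [Real.dist_eq] using PiLp.dist_apply_le y x i

lemma volume_shiftedDyadicCube (n : ℕ) (k : ℤ) (m : Fin n → ℤ) (t : Fin n → ℝ) :
    volume (shiftedDyadicCube n k m t) = ENNReal.ofReal (((2 : ℝ) ^ k) ^ n) := by
  have hP : (0 : ℝ) ≤ 2 ^ k := by positivity
  have hcube : shiftedDyadicCube n k m t = (MeasurableEquiv.toLp 2 (Fin n → ℝ)).symm ⁻¹'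
      Set.univ.pi fun i => Set.Ico (2 ^ k * (m i + (-1) ^ k * t i))
        (2 ^ k * (m i + (-1) ^ k * t i) + 2 ^ k) := by
    ext y
    simp only [shiftedDyadicCube, Set.mem_ofPred_eq, Set.mem_preimage, Set.mem_univ_pi,
      Set.mem_Ico, mul_add, mul_one]
    rfl
  rw [hcube, (EuclideanSpace.volume_preserving_symm_measurableEquiv_toLp (Fin n)).measure_preimage
    (MeasurableSet.univ_pi fun _ => measurableSet_Ico).nullMeasurableSet, volume_pi_pi]
  simp only [Real.volume_Ico, add_sub_cancel_left, Finset.prod_const, Finset.card_univ,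
    Fintype.card_fin, ENNReal.ofReal_pow hP]

lemma exists_zpow_two_mem_Ioc {r : ℝ} (hr : 0 < r) : ∃ k : ℤ, 6 * r < 2 ^ k ∧ 2 ^ k ≤ 12 * r := by
  refine ⟨Int.log 2 (6 * r) + 1, ?_, ?_⟩
  · exact_mod_cast Int.lt_zpow_succ_log_self (b := 2) (by norm_num) (6 * r)
  · have hlog : ((2 : ℕ) : ℝ) ^ Int.log 2 (6 * r) ≤ 6 * r :=
      Int.zpow_log_le_self (by norm_num) (by positivity)
    rw [zpow_add_one₀ two_ne_zero]
    push_cast at hlog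
    linarith

lemma exists_int_add_shift_mem_Icc (q : ℝ) (k : ℤ) : ∃ (b : Bool) (m : ℤ),
    q ∈ Set.Icc ((m : ℝ) + (-1) ^ k * (if b then 1 / 3 else 0))
      ((m : ℝ) + (-1) ^ k * (if b then 1 / 3 else 0) + 2 / 3) := by
  have hq : (⌊q⌋ : ℝ) + Int.fract q = q := Int.floor_add_fract q
  have hfract := Int.fract_lt_one q
  by_cases hlow : Int.fract q ≤ 2 / 3
  · refine ⟨false, ⌊q⌋, ?_, ?_⟩ <;> simp only [Bool.false_eq_true, if_false] <;>
      linarith [Int.fract_nonneg q]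
  · replace hlow := not_le.mp hlow
    rcases Int.even_or_odd k with hk | hk
    · refine ⟨true, ⌊q⌋, ?_, ?_⟩ <;> simp only [if_true, hk.neg_one_zpow] <;> linarith
    · refine ⟨true, ⌊q⌋ + 1, ?_, ?_⟩ <;> simp only [if_true, hk.neg_one_zpow] <;> push_cast <;>
        linarith

lemma exists_shiftedDyadicCube_superset_ball {n : ℕ} (x : EuclideanSpace ℝ (Fin n)) {r : ℝ}
    (hr : 0 < r) : ∃ (k : ℤ) (t : Fin n → Bool) (m : Fin n → ℤ), r ≤ 2 ^ k ∧ 2 ^ k ≤ 12 * r ∧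
      Metric.ball x r ⊆ shiftedDyadicCube n k m (fun i => if t i then 1 / 3 else 0) := by
  obtain ⟨k, hk6, hk12⟩ := exists_zpow_two_mem_Ioc hr
  have hP : (0 : ℝ) < 2 ^ k := by positivity
  choose t m hmem using fun i => exists_int_add_shift_mem_Icc ((x i - r) / 2 ^ k) k
  refine ⟨k, t, m, by linarith, hk12, fun y hy i => ?_⟩
  obtain ⟨hs, hs'⟩ := hmem i
  rw [le_div_iff₀ hP] at hs
  rw [div_le_iff₀ hP] at hs'
  obtain ⟨hy₁, hy₂⟩ := abs_lt.mp ((abs_apply_sub_apply_le_dist x y i).trans_lt hy)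
  constructor <;> linarith

lemma ENNReal.div_le_mul_div_of_le {a a' v v' c : ℝ≥0∞} (ha : a ≤ a') (hv : v' ≤ c * v)
    (hv'0 : v' ≠ 0) (hv'top : v' ≠ ⊤) : a / v ≤ c * (a' / v') := by
  have hinv : v⁻¹ ≤ c / v' := by
    rw [ENNReal.le_div_iff_mul_le (Or.inl hv'0) (Or.inl hv'top), mul_comm, ← div_eq_mul_inv]
    exact ENNReal.div_le_of_le_mul hv
  calc a / v ≤ a' * (c / v') := by rw [div_eq_mul_inv]; gcongr
    _ = c * (a' / v') := by rw [div_eq_mul_inv, div_eq_mul_inv]; ring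

lemma ofReal_mul_pow_eq_div_mul_volume_ball {n : ℕ} (x : EuclideanSpace ℝ (Fin n)) {C r : ℝ}
    (hC : 0 ≤ C) (hr : 0 < r) :
    ENNReal.ofReal ((C * r) ^ n) =
      ENNReal.ofReal (C ^ n) / volume (Metric.ball (0 : EuclideanSpace ℝ (Fin n)) 1) *
        volume (Metric.ball x r) := by
  rw [Measure.addHaar_ball_of_pos volume x hr, finrank_euclideanSpace_fin,
    mul_comm (ENNReal.ofReal _), ← mul_assoc, ENNReal.div_mul_cancel (Metric.measure_ball_pos volume _ one_pos).ne'
      measure_ball_lt_top.ne, mul_pow, ENNReal.ofReal_mul (by positivity)]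

lemma le_dyadicFracMax {n : ℕ} {α : ℝ} {t : Fin n → ℝ} (μ : Measure (EuclideanSpace ℝ (Fin n)))
    {x : EuclideanSpace ℝ (Fin n)} {k : ℤ} {m : Fin n → ℤ} (hx : x ∈ shiftedDyadicCube n k m t) :
    ENNReal.ofReal (((2 : ℝ) ^ k) ^ α) * μ (shiftedDyadicCube n k m t)
      / volume (shiftedDyadicCube n k m t) ≤ dyadicFracMax n α t μ x :=
  le_iSup_of_le k <| le_iSup_of_le m <| le_iSup_of_le hx le_rfl

theorem fracMax_le_sum_dyadicFracMax (n : ℕ) (α : ℝ) (hα : 0 ≤ α) :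
    ∃ c : ℝ≥0∞, 0 < c ∧ c ≠ ⊤ ∧
      ∀ (μ : Measure (EuclideanSpace ℝ (Fin n))) [IsLocallyFiniteMeasure μ]
        (x : EuclideanSpace ℝ (Fin n)),
        fracMax n α μ x ≤
          c * ∑ t : Fin n → Bool,
            dyadicFracMax n α (fun i => if t i then 1 / 3 else 0) μ x := by
  set ω := volume (Metric.ball (0 : EuclideanSpace ℝ (Fin n)) 1)
  have hω : ω ≠ ⊤ := measure_ball_lt_top.ne
  refine ⟨ENNReal.ofReal (12 ^ n) / ω, ENNReal.div_pos (by positivity) hω,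
    ENNReal.div_ne_top ENNReal.ofReal_ne_top (Metric.measure_ball_pos volume _ one_pos).ne',
    fun μ _ x => iSup₂_le fun r hr => ?_⟩
  obtain ⟨k, t, m, hrk, hk, hsub⟩ := exists_shiftedDyadicCube_superset_ball x hr
  set Q := shiftedDyadicCube n k m fun i => if t i then 1 / 3 else 0
  have hvolQ : volume Q = ENNReal.ofReal (((2 : ℝ) ^ k) ^ n) := volume_shiftedDyadicCube ..
  have hvol : volume Q ≤ ENNReal.ofReal (12 ^ n) / ω * volume (Metric.ball x r) := by
    rw [hvolQ, ← ofReal_mul_pow_eq_div_mul_volume_ball x (by norm_num) hr]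
    gcongr
  calc ENNReal.ofReal (r ^ α) * μ (Metric.ball x r) / volume (Metric.ball x r)
      ≤ ENNReal.ofReal (12 ^ n) / ω * (ENNReal.ofReal (((2 : ℝ) ^ k) ^ α) *
          μ Q / volume Q) := by
        refine ENNReal.div_le_mul_div_of_le ?_ hvol ?_ ?_
        · gcongr
        · rw [hvolQ, ne_eq, ENNReal.ofReal_eq_zero, not_le]
          positivity
        · exact hvolQ ▸ ENNReal.ofReal_ne_top
    _ ≤ ENNReal.ofReal (12 ^ n) / ω * ∑ t : Fin n → Bool,
          dyadicFracMax n α (fun i => if t i then 1 / 3 else 0) μ x := by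
        gcongr
        refine (le_dyadicFracMax μ (hsub (Metric.mem_ball_self hr))).trans ?_
        exact Finset.single_le_sum (fun _ _ => zero_le (α := ℝ≥0∞)) (Finset.mem_univ t)
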